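/- arXiv:2012.01374 — 5 statements merged into one kernel-verified Lean document; each statement's English description precedes it below -/
import Mathlib

section
/- Let G be a finite non-abelian group, H a subgroup of G with H ≠ Z(H,G), and g ∈ K(H,G) with g ≠ 1 and g² = 1. If x ∈ H \ Z(H,G) is conjugate in G to xg, then the degree of x in Δ_{H,G}^g equals |G| - |Z(H,G)| - |C_G(x)| - 1. -/
open SimpleGraph

/-- `Z(H,G)`: the set of elements of `H` commuting with every element of `G`. -/
def relCenter (G : Type*) [Group G] (H : Subgroup G) : Set G :=
  {x : G | x ∈ H ∧ ∀ y : G, x * y = y * x}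

/-- The commutator `[x,y] = x⁻¹y⁻¹xy`. -/
def comm' {G : Type*} [Group G] (x y : G) : G :=
  x⁻¹ * y⁻¹ * x * y

lemma comm'_swap {G : Type*} [Group G] (x y : G) :
    comm' y x = (comm' x y)⁻¹ := by
  simp only [comm', mul_inv_rev, inv_inv, mul_assoc]

/-- `K(H,G) = {[x,y] : x ∈ H, y ∈ G}`. -/
def relComm (G : Type*) [Group G] (H : Subgroup G) : Set G :=
  {w : G | ∃ x ∈ H, ∃ y : G, comm' x y = w}

/-- The graph `Δ_{H,G}^g`: vertices are the elements of `G \ Z(H,G)`, and two distinct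
vertices `x`, `y` are adjacent iff (`x ∈ H` or `y ∈ H`) and `[x,y] ≠ g, g⁻¹`. -/
def gnc (G : Type*) [Group G] (H : Subgroup G) (g : G) :
    SimpleGraph (((relCenter G H)ᶜ : Set G)) where
  Adj x y := x ≠ y ∧ ((x : G) ∈ H ∨ (y : G) ∈ H) ∧
    comm' (x : G) (y : G) ≠ g ∧ comm' (x : G) (y : G) ≠ g⁻¹
  symm := by
    constructor
    rintro x y ⟨hxy, hH, h1, h2⟩
    refine ⟨fun h => hxy h.symm, hH.symm, ?_, ?_⟩
    · rw [comm'_swap, ne_eq, inv_eq_iff_eq_inv]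
      exact h2
    · rw [comm'_swap, ne_eq, inv_eq_iff_eq_inv, inv_inv]
      exact h1
  loopless := by
    constructor
    rintro x ⟨h, -⟩
    exact h rfl

namespace Subgroup

variable {G : Type*} [Group G]

lemma mul_inv_mem_centralizer_singleton_iff {x y z : G} :
    y * z⁻¹ ∈ centralizer {x} ↔ y⁻¹ * x * y = z⁻¹ * x * z := by
  rw [mem_centralizer_singleton_iff]
  constructor <;> intro h
  · calc y⁻¹ * x * y = y⁻¹ * (y * z⁻¹ * x) * z := by rw [h]; group
      _ = z⁻¹ * x * z := by group
  · calc y * z⁻¹ * x = y * (y⁻¹ * x * y) * z⁻¹ := by rw [h]; group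
      _ = x * (y * z⁻¹) := by group

end Subgroup

section Commutator

variable {G : Type*} [Group G]

lemma comm'_eq_iff {x y g : G} : comm' x y = g ↔ y⁻¹ * x * y = x * g := by
  rw [show comm' x y = x⁻¹ * (y⁻¹ * x * y) by simp only [comm', mul_assoc],
    inv_mul_eq_iff_eq_mul]

lemma comm'_self (x : G) : comm' x x = 1 := by
  simp [comm']

lemma comm'_eq_one_of_mem_relCenter {H : Subgroup G} (x : G) {y : G}
    (hy : y ∈ relCenter G H) : comm' x y = 1 := by
  simp [comm', mul_assoc, (hy.2 x).symm]

/-- When `x` is conjugate to `xg` by `z`, the solutions of `[x,y] = g` form the coset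
`C_G(x) z`. -/
lemma ncard_setOf_comm'_eq {x z g : G} (hz : z⁻¹ * x * z = x * g) :
    {y | comm' x y = g}.ncard = Nat.card (Subgroup.centralizer {x}) :=
  Nat.card_congr <| (Equiv.mulRight z⁻¹).subtypeEquiv fun y => by
    rw [Set.mem_ofPred_eq, comm'_eq_iff, ← hz]
    exact Subgroup.mul_inv_mem_centralizer_singleton_iff.symm

/-- The three kinds of non-neighbours are disjoint since `[x,y] = 1` for `y ∈ Z(H,G)` and
for `y = x`. -/
lemma ncard_neighbors_add_ncard_nonneighbors [Finite G] {H : Subgroup G} {x g : G}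
    (hx : x ∉ relCenter G H) (hg1 : g ≠ 1) :
    {y | y ∉ relCenter G H ∧ y ≠ x ∧ comm' x y ≠ g}.ncard
      + ((relCenter G H).ncard + 1 + {y | comm' x y = g}.ncard) = Nat.card G := by
  have hcompl : {y | y ∉ relCenter G H ∧ y ≠ x ∧ comm' x y ≠ g}ᶜ
      = relCenter G H ∪ {x} ∪ {y | comm' x y = g} := by
    ext y
    simp only [Set.mem_compl_iff, Set.mem_ofPred_eq, Set.mem_union, Set.mem_singleton_iff]
    tauto
  have hdisj_center : Disjoint (relCenter G H) {x} :=
    Set.disjoint_singleton_right.mpr hx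
  have hdisj_comm : Disjoint (relCenter G H ∪ {x}) {y | comm' x y = g} := by
    refine Set.disjoint_left.mpr fun y hy hyg => hg1 (hyg.symm.trans ?_)
    rcases hy with hy | rfl
    · exact comm'_eq_one_of_mem_relCenter x hy
    · exact comm'_self y
  rw [← Set.ncard_add_ncard_compl {y | y ∉ relCenter G H ∧ y ≠ x ∧ comm' x y ≠ g}, hcompl,
    Set.ncard_union_eq hdisj_comm, Set.ncard_union_eq hdisj_center, Set.ncard_singleton]

end Commutator

lemma gnc_degree_eq_ncard {G : Type*} [Group G] {H : Subgroup G} {g x : G}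
    (hxH : x ∈ H) (hx : x ∉ relCenter G H) (hg : g⁻¹ = g)
    [Fintype ((gnc G H g).neighborSet ⟨x, hx⟩)] :
    (gnc G H g).degree ⟨x, hx⟩ = {y | y ∉ relCenter G H ∧ y ≠ x ∧ comm' x y ≠ g}.ncard := by
  rw [← card_neighborSet_eq_degree, ← Nat.card_eq_fintype_card]
  refine Nat.card_congr
    { toFun := fun y => ⟨y.1.1, y.1.2, fun h => y.2.1 (Subtype.ext h.symm), y.2.2.2.1⟩
      invFun := fun y => ⟨⟨y.1, y.2.1⟩, fun h => y.2.2.1 (congrArg Subtype.val h).symm,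
        Or.inl hxH, y.2.2.2, by rw [hg]; exact y.2.2.2⟩
      left_inv := fun _ => rfl
      right_inv := fun _ => rfl }

open scoped Classical in
theorem stmt2_general {G : Type*} [Group G] [Fintype G]
    (H : Subgroup G)
    (g : G) (hg1 : g ≠ 1) (hg2 : g ^ 2 = 1)
    (x : G) (hxH : x ∈ H) (hx : x ∉ relCenter G H)
    (hconj : ∃ z : G, z⁻¹ * x * z = x * g) :
    (gnc G H g).degree ⟨x, hx⟩
      = Nat.card G - Nat.card (relCenter G H)
          - Nat.card (Subgroup.centralizer ({x} : Set G)) - 1 := by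
  obtain ⟨z, hz⟩ := hconj
  have hg : g⁻¹ = g := inv_eq_of_mul_eq_one_left (by rwa [pow_two] at hg2)
  have hcount := ncard_neighbors_add_ncard_nonneighbors (H := H) hx hg1
  rw [ncard_setOf_comm'_eq hz] at hcount
  rw [gnc_degree_eq_ncard hxH hx hg, Nat.card_coe_set_eq]
  omega

open scoped Classical in
/-- degree of a vertex `x ∈ H \ Z(H,G)` when `g ≠ 1`, `g² = 1` and
`x` is conjugate to `xg`. -/
theorem stmt2 {G : Type*} [Group G] [Fintype G]
    (hna : ∃ x y : G, x * y ≠ y * x)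
    (H : Subgroup G) (hH : (H : Set G) ≠ relCenter G H)
    (g : G) (hgK : g ∈ relComm G H) (hg1 : g ≠ 1) (hg2 : g ^ 2 = 1)
    (x : G) (hxH : x ∈ H) (hx : x ∉ relCenter G H)
    (hconj : ∃ z : G, z⁻¹ * x * z = x * g) :
    (gnc G H g).degree ⟨x, hx⟩
      = Nat.card G - Nat.card (relCenter G H)
          - Nat.card (Subgroup.centralizer ({x} : Set G)) - 1 :=
  stmt2_general H g hg1 hg2 x hxH hx hconj
end

section
/- Let G be a finite non-abelian group with |G| ≤ 12, H a subgroup of G with H ≠ Z(H,G), and take g = 1. Then the graph Δ_{H,G}^1 is a tree if and only if |H| = 2 and G is isomorphic to the dihedral group D_6 of order 6 or to the dihedral group D_10 of order 10. -/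
/-!
For `g = 1` two vertices of `Δ_{H,G}^1` are adjacent iff one of them lies in `H` and they do not
commute. In a tree, two distinct noncentral elements `a, b` of `H` would lie on a triangle
`a, b, z` (if they do not commute) or on a 4-cycle `a, z, b, a * z` (if they do), where `z`
commutes with neither; so `H` has a unique noncentral element `a`. A noncentral `x ≠ a`
commuting with `a` lies outside `H`, so its neighbours are noncentral elements of `H`, i.e. `a`,
which is absurd; hence `Z(G) = 1`, the centralizer of `a` is `{1, a}` and `H = {1, a}`.
A nontrivial central element of a Sylow 2-subgroup containing `a` commutes with `a`, so `⟨a⟩`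
is a Sylow 2-subgroup and `|G| ∈ {6, 10}`. In a group of order `2p` the involution `a` inverts
the normal subgroup of order `p`, which presents `G` as `D_{2p}`. Conversely, if `G ≅ D_6, D_10`
and `|H| = 2`, the involution of `H` is self-centralizing and the graph is the star centred at it.
-/

open SimpleGraph

section

variable {G : Type*} [Group G]

def IsSelfCentralizing (a : G) : Prop := ∀ x, Commute x a → x = 1 ∨ x = a

namespace IsSelfCentralizing

variable {a : G}

lemma mul_self_eq_one (ha : IsSelfCentralizing a) (ha1 : a ≠ 1) : a * a = 1 :=
  (ha (a * a) ((Commute.refl a).mul_left (Commute.refl a))).resolve_right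
    fun h => ha1 (mul_eq_left.mp h)

lemma orderOf_eq_two (ha : IsSelfCentralizing a) (ha1 : a ≠ 1) : orderOf a = 2 :=
  orderOf_eq_prime (by rw [sq, ha.mul_self_eq_one ha1]) ha1

lemma of_map {G' F : Type*} [Group G'] [FunLike F G G'] [MonoidHomClass F G G'] {f : F}
    (hf : Function.Injective f) (ha : IsSelfCentralizing (f a)) : IsSelfCentralizing a :=
  fun x hx =>
  (ha (f x) (hx.map f)).imp (fun h => hf (h.trans (map_one f).symm)) (fun h => hf h)

lemma not_four_dvd_card [Finite G] (ha : IsSelfCentralizing a) (ha1 : a ≠ 1) :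
    ¬ 4 ∣ Nat.card G := by
  intro h4
  have : Fact (Nat.Prime 2) := ⟨Nat.prime_two⟩
  have hpa : IsPGroup 2 (Subgroup.zpowers a) :=
    IsPGroup.of_card (n := 1) (by rw [Nat.card_zpowers, ha.orderOf_eq_two ha1, pow_one])
  obtain ⟨P, hP⟩ := hpa.exists_le_sylow
  have haP : a ∈ (P : Subgroup G) := hP (Subgroup.mem_zpowers a)
  have : Nontrivial P := ⟨⟨⟨a, haP⟩, 1, fun h => ha1 (congrArg Subtype.val h)⟩⟩
  have := P.isPGroup'.center_nontrivial
  obtain ⟨z, hz⟩ := exists_ne (1 : Subgroup.center P)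
  have hza : ((z : P) : G) = a := by
    refine (ha _ ?_).resolve_left fun h => hz ?_
    · exact congrArg Subtype.val (Subgroup.mem_center_iff.mp z.2 ⟨a, haP⟩).symm
    · exact Subtype.ext (Subtype.ext h)
  have hPa : (P : Subgroup G) ≤ Subgroup.zpowers a := by
    intro x hx
    have hxa : Commute x a :=
      hza ▸ congrArg Subtype.val (Subgroup.mem_center_iff.mp z.2 ⟨x, hx⟩)
    rcases ha x hxa with rfl | rfl
    · exact Subgroup.one_mem _
    · exact Subgroup.mem_zpowers _
  have h4P : 2 ^ 2 ∣ Nat.card P := P.pow_dvd_card_of_pow_dvd_card (by norm_num [h4])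
  have := (h4P.trans (Subgroup.card_dvd_of_le hPa))
  rw [Nat.card_zpowers, ha.orderOf_eq_two ha1] at this
  norm_num at this

lemma conj_eq_inv {N : Subgroup G} [N.Normal] [IsMulCommutative N]
    (ha : IsSelfCentralizing a) (haN : a ∉ N) {x : G} (hx : x ∈ N) :
    a * x * a⁻¹ = x⁻¹ := by
  have ha2 : a * a = 1 := ha.mul_self_eq_one fun h => haN (h ▸ N.one_mem)
  have hainv : a⁻¹ = a := inv_eq_of_mul_eq_one_right ha2
  set y := a * x * a⁻¹ with hy
  have hyN : y ∈ N := ‹N.Normal›.conj_mem x hx a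
  -- `x * y` is fixed by conjugation with `a`, hence lies in `N ∩ C(a) = 1`
  have hcomm : Commute (x * y) a := by
    have : a * (x * y) * a⁻¹ = y * x := by simp [hy, hainv, mul_assoc, ha2]
    rw [setLike_mul_comm hyN hx, mul_inv_eq_iff_eq_mul] at this
    exact this.symm
  have hxy : x * y = 1 :=
    (ha _ hcomm).resolve_right fun h => haN (h ▸ N.mul_mem hx hyN)
  exact eq_inv_of_mul_eq_one_right hxy

end IsSelfCentralizing

namespace DihedralGroup

variable {n : ℕ}

def lift (ψ : Multiplicative (ZMod n) →* G) (a : G) (ha : a * a = 1)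
    (hψ : ∀ x, a * ψ x * a⁻¹ = (ψ x)⁻¹) : DihedralGroup n →* G :=
  have hainv : a⁻¹ = a := inv_eq_of_mul_eq_one_right ha
  have hswap : ∀ x, ψ x * a = a * (ψ x)⁻¹ := fun x => by
    rw [← hψ, hainv, ← mul_assoc, ← mul_assoc, ha, one_mul]
  MonoidHom.mk'
    (fun
      | r i => ψ (.ofAdd i)
      | sr i => a * ψ (.ofAdd i))
    (by
      rintro (i | i) (j | j)
      · simp [r_mul_r, ofAdd_add]
      · simp only [r_mul_sr]
        rw [← mul_assoc, hswap, mul_assoc, ← map_inv, ← map_mul, sub_eq_neg_add, ofAdd_add,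
          ofAdd_neg]
      · simp [sr_mul_r, ofAdd_add, mul_assoc]
      · simp only [sr_mul_sr]
        rw [mul_assoc, ← mul_assoc (ψ _), hswap, ← mul_assoc, ← mul_assoc, ha, one_mul,
          ← map_inv, ← map_mul, sub_eq_neg_add, ofAdd_add, ofAdd_neg])

lemma lift_injective {ψ : Multiplicative (ZMod n) →* G} {a : G} (ha : a * a = 1)
    (hψ : ∀ x, a * ψ x * a⁻¹ = (ψ x)⁻¹) (hψinj : Function.Injective ψ)
    (haψ : a ∉ ψ.range) :
    Function.Injective (lift ψ a ha hψ) := by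
  refine (injective_iff_map_eq_one _).mpr ?_
  rintro (i | i) h
  · exact congrArg r (hψinj (h.trans (map_one ψ).symm))
  · exact absurd ⟨(Multiplicative.ofAdd i)⁻¹, by
      rw [map_inv]; exact (eq_inv_of_mul_eq_one_left h).symm⟩ haψ

lemma isSelfCentralizing_of_mul_self_eq_one (hn : Odd n) {a : DihedralGroup n} (ha1 : a ≠ 1)
    (ha : a * a = 1) : IsSelfCentralizing a := by
  have two_eq_zero {i : ZMod n} : i + i = 0 → i = 0 :=
    (ZMod.add_self_eq_zero_iff_eq_zero hn).mp
  rcases a with i | i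
  · rw [r_mul_r, one_def] at ha
    exact absurd (by rw [two_eq_zero (r.inj ha), r_zero]) ha1
  · rintro (j | j) h
    · have hj : j + j = 0 := by
        have := sr.inj h.eq
        linear_combination -this
      left
      rw [two_eq_zero hj, r_zero]
    · have hij : (i - j) + (i - j) = 0 := by
        have := r.inj h.eq
        linear_combination this
      right
      rw [sub_eq_zero.mp (two_eq_zero hij)]

end DihedralGroup

namespace IsSelfCentralizing

variable {a : G}

theorem nonempty_mulEquiv_dihedralGroup [Finite G] {p : ℕ} [hp : Fact p.Prime] (hp2 : p ≠ 2)
    (hG : Nat.card G = 2 * p) (ha : IsSelfCentralizing a) (ha1 : a ≠ 1) :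
    Nonempty (G ≃* DihedralGroup p) := by
  obtain ⟨K, hK⟩ := Sylow.exists_subgroup_card_pow_prime (G := G) p (n := 1)
    (by rw [pow_one, hG]; exact dvd_mul_left p 2)
  rw [pow_one] at hK
  have : IsCyclic K := isCyclic_of_prime_card hK
  have : K.Normal := Subgroup.normal_of_index_eq_two <| by
    have := K.card_mul_index
    rw [hK, hG, mul_comm 2] at this
    exact Nat.eq_of_mul_eq_mul_left hp.out.pos this
  have haK : a ∉ K := fun h => hp2 <| (Nat.prime_dvd_prime_iff_eq Nat.prime_two hp.out).mp
    (ha.orderOf_eq_two ha1 ▸ hK ▸ Subgroup.orderOf_dvd_natCard K h) |>.symm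
  let ψ : Multiplicative (ZMod p) →* G :=
    K.subtype.comp (mulEquivOfPrimeCardEq (by simp) hK).toMonoidHom
  have hψK : ∀ x, ψ x ∈ K := fun x => Subtype.property _
  have hψ : ∀ x, a * ψ x * a⁻¹ = (ψ x)⁻¹ := fun x => ha.conj_eq_inv haK (hψK x)
  have hF := DihedralGroup.lift_injective (ha.mul_self_eq_one ha1) hψ
    (Subtype.val_injective.comp (MulEquiv.injective _)) (by rintro ⟨x, rfl⟩; exact haK (hψK x))
  have hbij := (Nat.bijective_iff_injective_and_card _).mpr
    ⟨hF, by rw [DihedralGroup.nat_card, hG]⟩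
  exact ⟨(MulEquiv.ofBijective _ hbij).symm⟩

theorem nonempty_mulEquiv_dihedralGroup_three_or_five [Finite G]
    (hna : ∃ x y : G, ¬Commute x y) (hcard : Nat.card G ≤ 12)
    (ha : IsSelfCentralizing a) (ha1 : a ≠ 1) :
    Nonempty (G ≃* DihedralGroup 3) ∨ Nonempty (G ≃* DihedralGroup 5) := by
  have h2 : 2 ∣ Nat.card G := ha.orderOf_eq_two ha1 ▸ orderOf_dvd_natCard a
  have h4 := ha.not_four_dvd_card ha1
  have hne2 : Nat.card G ≠ 2 := fun h => by
    have := isCyclic_of_prime_card h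
    obtain ⟨x, y, hxy⟩ := hna
    exact hxy (mul_comm' x y)
  have hpos := Nat.card_pos (α := G)
  have : Fact (Nat.Prime 5) := ⟨by norm_num⟩
  obtain h | h : Nat.card G = 2 * 3 ∨ Nat.card G = 2 * 5 := by omega
  · exact .inl (ha.nonempty_mulEquiv_dihedralGroup (by norm_num) h ha1)
  · exact .inr (ha.nonempty_mulEquiv_dihedralGroup (by norm_num) h ha1)

end IsSelfCentralizing

lemma Subgroup.card_eq_two_iff {H : Subgroup G} :
    Nat.card H = 2 ↔ ∃ a ≠ 1, (H : Set G) = {1, a} := by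
  rw [← SetLike.coe_sort_coe, Nat.card_coe_set_eq, Set.ncard_eq_two]
  constructor
  · rintro ⟨x, y, hxy, hH⟩
    have h1 : (1 : G) ∈ (H : Set G) := H.one_mem
    rcases hH ▸ h1 with rfl | rfl
    · exact ⟨y, hxy.symm, hH⟩
    · exact ⟨x, hxy, hH.trans (Set.pair_comm _ _)⟩
  · rintro ⟨a, ha, hH⟩
    exact ⟨1, a, ha.symm, hH⟩

lemma exists_not_commute_of_notMem_center {a b : G} (ha : a ∉ Subgroup.center G)
    (hb : b ∉ Subgroup.center G) : ∃ z, ¬Commute a z ∧ ¬Commute b z := by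
  obtain ⟨u, hu⟩ : ∃ u, ¬Commute u a := by
    simpa [Subgroup.mem_center_iff, commute_iff_eq] using ha
  obtain ⟨v, hv⟩ : ∃ v, ¬Commute v b := by
    simpa [Subgroup.mem_center_iff, commute_iff_eq] using hb
  by_cases hbu : Commute b u
  · by_cases hav : Commute a v
    · refine ⟨u * v, fun h => hu ?_, fun h => hv ?_⟩
      · simpa using (h.mul_right hav.inv_right).symm
      · simpa using (hbu.inv_right.mul_right h).symm
    · exact ⟨v, hav, fun h => hv h.symm⟩
  · exact ⟨u, fun h => hu h.symm, hbu⟩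

open scoped commutatorElement in
lemma comm'_eq_one_iff {x y : G} : comm' x y = 1 ↔ Commute x y := by
  rw [show comm' x y = ⁅x⁻¹, y⁻¹⁆ by simp [comm', commutatorElement_def],
    commutatorElement_eq_one_iff_commute, Commute.inv_inv_iff]

end

lemma SimpleGraph.IsAcyclic.eq_of_adj_of_adj {V : Type*} {Γ : SimpleGraph V} (hΓ : Γ.IsAcyclic)
    {x x' y z : V} (hxx' : x ≠ x') (hxy : Γ.Adj x y) (hyx' : Γ.Adj y x') (hxz : Γ.Adj x z)
    (hzx' : Γ.Adj z x') : y = z := by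
  have hp : (Walk.cons hxy (Walk.cons hyx' Walk.nil)).IsPath := by
    simp [Walk.isPath_def, hxy.ne, hyx'.ne, hxx']
  have hq : (Walk.cons hxz (Walk.cons hzx' Walk.nil)).IsPath := by
    simp [Walk.isPath_def, hxz.ne, hzx'.ne, hxx']
  have := (hΓ.subsingleton_path x x').elim ⟨_, hp⟩ ⟨_, hq⟩
  simpa using congrArg (fun p : Γ.Path x x' => (p : Γ.Walk x x').support) this

section

variable {G : Type*} [Group G] {H : Subgroup G}

lemma mem_relCenter_iff {x : G} : x ∈ relCenter G H ↔ x ∈ H ∧ x ∈ Subgroup.center G := by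
  simp [relCenter, Subgroup.mem_center_iff, eq_comm]

lemma notMem_relCenter_of_not_commute {x y : G} (h : ¬Commute x y) : x ∉ relCenter G H :=
  fun hx => h (Subgroup.mem_center_iff.mp (mem_relCenter_iff.mp hx).2 y).symm

lemma exists_mem_notMem_center (hH : (H : Set G) ≠ relCenter G H) :
    ∃ a ∈ H, a ∉ Subgroup.center G := by
  by_contra! h
  exact hH (Set.ext fun x => ⟨fun hx => mem_relCenter_iff.mpr ⟨hx, h x hx⟩, fun hx => hx.1⟩)

lemma gnc_one_adj_iff {x y : ((relCenter G H)ᶜ : Set G)} :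
    (gnc G H 1).Adj x y ↔ ((x : G) ∈ H ∨ (y : G) ∈ H) ∧ ¬Commute (x : G) y := by
  simp only [gnc, inv_one, ne_eq, comm'_eq_one_iff, and_self]
  exact ⟨fun h => h.2, fun h => ⟨fun hxy => h.2 (hxy ▸ Commute.refl _), h⟩⟩

lemma gnc_one_adj {x y : G} (hH : x ∈ H ∨ y ∈ H) (hxy : ¬Commute x y) :
    (gnc G H 1).Adj ⟨x, notMem_relCenter_of_not_commute hxy⟩
      ⟨y, notMem_relCenter_of_not_commute (mt Commute.symm hxy)⟩ :=
  gnc_one_adj_iff.mpr ⟨hH, hxy⟩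

lemma eq_of_mem_of_notMem_center_of_isAcyclic (hT : (gnc G H 1).IsAcyclic) {a b : G}
    (ha : a ∈ H) (hb : b ∈ H) (ha' : a ∉ Subgroup.center G) (hb' : b ∉ Subgroup.center G) :
    a = b := by
  classical
  by_contra hab
  obtain ⟨z, haz, hbz⟩ := exists_not_commute_of_notMem_center ha' hb'
  by_cases hcomm : Commute a b
  · have haaz : ¬Commute a (a * z) := fun h =>
      haz (by simpa using (Commute.refl a).inv_right.mul_right h)
    have hazb : ¬Commute (a * z) b := fun h =>
      hbz (by simpa using (hcomm.inv_left.mul_left h).symm)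
    have := hT.eq_of_adj_of_adj (Subtype.coe_ne_coe.mp hab) (gnc_one_adj (.inl ha) haz)
      (gnc_one_adj (.inr hb) (mt Commute.symm hbz)) (gnc_one_adj (.inl ha) haaz)
      (gnc_one_adj (.inr hb) hazb)
    exact ha' (right_eq_mul.mp (congrArg Subtype.val this) ▸ Subgroup.one_mem _)
  · exact hT.cliqueFree le_rfl _ (is3Clique_triple_iff.mpr
      ⟨gnc_one_adj (.inl ha) hcomm, gnc_one_adj (.inl ha) haz, gnc_one_adj (.inl hb) hbz⟩)

lemma isSelfCentralizing_of_isTree_gnc (hT : (gnc G H 1).IsTree) {a : G} (ha : a ∈ H)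
    (ha' : a ∉ Subgroup.center G) : IsSelfCentralizing a := by
  have hcent : ∀ x, Commute x a → x ∈ Subgroup.center G ∨ x = a := by
    intro x hxa
    by_contra! ⟨hx, hxa'⟩
    have hxH : x ∉ H := fun hxH =>
      hxa' (eq_of_mem_of_notMem_center_of_isAcyclic hT.isAcyclic hxH ha hx ha')
    have hxV : x ∈ (relCenter G H)ᶜ := fun h => hxH (mem_relCenter_iff.mp h).1
    have haV : a ∈ (relCenter G H)ᶜ := fun h => ha' (mem_relCenter_iff.mp h).2
    have : Nontrivial ((relCenter G H)ᶜ : Set G) :=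
      ⟨⟨x, hxV⟩, ⟨a, haV⟩, Subtype.coe_ne_coe.mp hxa'⟩
    obtain ⟨u, hu⟩ := hT.connected.preconnected.exists_adj_of_nontrivial ⟨x, hxV⟩
    obtain ⟨huH, hxu⟩ := gnc_one_adj_iff.mp hu
    have hu' : (u : G) = a := eq_of_mem_of_notMem_center_of_isAcyclic hT.isAcyclic
      (huH.resolve_left hxH) ha (fun hu => hxu (Subgroup.mem_center_iff.mp hu x)) ha'
    exact hxu (hu' ▸ hxa)
  have hZ : ∀ z ∈ Subgroup.center G, z = 1 := by
    intro z hz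
    have hza : Commute z a := (Subgroup.mem_center_iff.mp hz a).symm
    rcases hcent (z * a) (hza.mul_left (Commute.refl a)) with h | h
    · exact absurd (by simpa using Subgroup.mul_mem _ (Subgroup.inv_mem _ hz) h) ha'
    · exact mul_eq_right.mp h
  exact fun x hx => (hcent x hx).imp_left (hZ x)

lemma gnc_one_eq_starGraph {a : G} (haH : a ∈ H) (ha : a ∉ Subgroup.center G)
    (hH : ∀ x ∈ H, x = 1 ∨ x = a) (hsc : IsSelfCentralizing a) :
    gnc G H 1 = starGraph ⟨a, fun h => ha (mem_relCenter_iff.mp h).2⟩ := by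
  have h1 (x : ((relCenter G H)ᶜ : Set G)) : (x : G) ≠ 1 := fun hx =>
    x.2 (mem_relCenter_iff.mpr ⟨hx ▸ H.one_mem, hx ▸ Subgroup.one_mem _⟩)
  have hmem (x : ((relCenter G H)ᶜ : Set G)) : (x : G) ∈ H ↔ (x : G) = a :=
    ⟨fun hx => (hH x hx).resolve_left (h1 x), fun hx => hx ▸ haH⟩
  have hnc (x : ((relCenter G H)ᶜ : Set G)) (hxa : (x : G) ≠ a) : ¬Commute (x : G) a :=
    fun hx => (hsc x hx).elim (h1 x) hxa
  ext x y
  simp only [gnc_one_adj_iff, starGraph_adj, hmem, ne_eq, Subtype.ext_iff]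
  constructor
  · rintro ⟨hxy, hc⟩
    exact ⟨fun h => hc (h ▸ Commute.refl _), hxy⟩
  · rintro ⟨hne, hxa | hya⟩
    · exact ⟨.inl hxa, fun h => hnc y (fun hya => hne (hxa.trans hya.symm)) (hxa ▸ h.symm)⟩
    · exact ⟨.inr hya, fun h => hnc x (fun hxa => hne (hxa.trans hya.symm)) (hya ▸ h)⟩

theorem isTree_gnc_one_iff (hH : (H : Set G) ≠ relCenter G H) :
    (gnc G H 1).IsTree ↔ Nat.card H = 2 ∧ ∀ a ∈ H, a ≠ 1 → IsSelfCentralizing a := by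
  obtain ⟨a, haH, ha⟩ := exists_mem_notMem_center hH
  have ha1 : a ≠ 1 := fun h => ha (h ▸ Subgroup.one_mem _)
  constructor
  · intro hT
    have hsc := isSelfCentralizing_of_isTree_gnc hT haH ha
    have hHa : ∀ b ∈ H, b = 1 ∨ b = a := fun b hb => by
      by_cases hbc : b ∈ Subgroup.center G
      · exact hsc b (Subgroup.mem_center_iff.mp hbc a).symm
      · exact .inr (eq_of_mem_of_notMem_center_of_isAcyclic hT.isAcyclic hb haH hbc ha)
    refine ⟨Subgroup.card_eq_two_iff.mpr ⟨a, ha1, ?_⟩,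
      fun b hb hb1 => (hHa b hb).resolve_left hb1 ▸ hsc⟩
    ext b
    exact ⟨hHa b, by rintro (rfl | rfl); exacts [H.one_mem, haH]⟩
  · rintro ⟨h2, hsc⟩
    obtain ⟨b, hb1, hHb⟩ := Subgroup.card_eq_two_iff.mp h2
    have hHb' : ∀ x ∈ H, x = 1 ∨ x = b := fun x hx => by rwa [← SetLike.mem_coe, hHb] at hx
    obtain rfl : a = b := (hHb' a haH).resolve_left ha1
    rw [gnc_one_eq_starGraph haH ha hHb' (hsc a haH ha1)]
    exact isTree_starGraph _

end

/-- for `|G| ≤ 12` and `g = 1`, `Δ_{H,G}^1` is a tree iff `|H| = 2` and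
`G ≅ D₆` or `G ≅ D₁₀`. -/
theorem stmt7 {G : Type*} [Group G] [Fintype G]
    (hna : ∃ x y : G, x * y ≠ y * x) (hcard : Nat.card G ≤ 12)
    (H : Subgroup G) (hH : (H : Set G) ≠ relCenter G H) :
    (gnc G H 1).IsTree ↔
      Nat.card H = 2 ∧
        (Nonempty (G ≃* DihedralGroup 3) ∨ Nonempty (G ≃* DihedralGroup 5)) := by
  rw [isTree_gnc_one_iff hH]
  refine and_congr_right fun h2 => ⟨fun hsc => ?_, fun hD a haH ha1 => ?_⟩
  · obtain ⟨a, ha1, hHa⟩ := Subgroup.card_eq_two_iff.mp h2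
    have haH : a ∈ H := by simp [← SetLike.mem_coe, hHa]
    exact (hsc a haH ha1).nonempty_mulEquiv_dihedralGroup_three_or_five hna hcard ha1
  · have ha2 : a * a = 1 := by
      rw [← sq, ← orderOf_dvd_iff_pow_eq_one, ← h2]
      exact Subgroup.orderOf_dvd_natCard H haH
    have of_dihedral {n : ℕ} (hn : Odd n) (e : G ≃* DihedralGroup n) : IsSelfCentralizing a :=
      .of_map (f := e) e.injective <| DihedralGroup.isSelfCentralizing_of_mul_self_eq_one hn
        (by simpa using ha1) (by rw [← map_mul, ha2, map_one])
    rcases hD with ⟨⟨e⟩⟩ | ⟨⟨e⟩⟩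
    exacts [of_dihedral (by decide) e, of_dihedral (by decide) e]
end

section
/- Let G be a finite non-abelian group, H a subgroup of G, and g ∈ H \ Z(H,G) with g³ ≠ 1 (i.e., the order of g is not 3). Then the graph Δ_{H,G}^g is connected and any two of its vertices are at distance at most 3; in particular its diameter is at most 3. -/
open SimpleGraph

/-!
Every vertex `x ≠ g` is adjacent to `g`, unless `[x,g] = g⁻¹`, since `[x,g] = g` would force
`g = 1`. If `[x,g] = g⁻¹` then `[x,g²] = g⁻²`, which differs from `g` and `g⁻¹` because
`g³ ≠ 1` and `g ≠ 1`; so such an `x` is adjacent to `g²`, itself adjacent to `g`. When `g²` is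
central no such `x` exists, as `[x,g²] = 1` would give `g² = 1`. Hence the closed
neighbourhoods of `g` and `g²` cover the graph, and its diameter is at most `3`.
-/

theorem SimpleGraph.ediam_le_three_of_edist_le_one {V : Type*} {Γ : SimpleGraph V} {a b : V}
    (hab : Γ.edist a b ≤ 1) (hcover : ∀ v, Γ.edist v a ≤ 1 ∨ Γ.edist v b ≤ 1) :
    Γ.ediam ≤ 3 := by
  have hpair : ∀ x ∈ ({a, b} : Set V), ∀ y ∈ ({a, b} : Set V), Γ.edist x y ≤ 1 := by
    rintro x (rfl | rfl) y (rfl | rfl)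
    exacts [by simp, hab, edist_comm (G := Γ) ▸ hab, by simp]
  have hnear : ∀ v, ∃ x ∈ ({a, b} : Set V), Γ.edist v x ≤ 1 := fun v =>
    (hcover v).elim (fun h => ⟨a, by simp, h⟩) (fun h => ⟨b, by simp, h⟩)
  refine ediam_le_of_edist_le fun u v => ?_
  obtain ⟨x, hx, hux⟩ := hnear u
  obtain ⟨y, hy, hvy⟩ := hnear v
  calc Γ.edist u v ≤ Γ.edist u x + Γ.edist x v := Γ.edist_triangle
    _ ≤ Γ.edist u x + (Γ.edist x y + Γ.edist y v) := by gcongr; exact Γ.edist_triangle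
    _ ≤ 1 + (1 + 1) := by gcongr; exacts [hpair x hx y hy, edist_comm (G := Γ) ▸ hvy]
    _ = 3 := by norm_num

section Commutator

variable {G : Type*} [Group G] {x g : G}

theorem comm'_eq_one_of_commute (h : Commute x g) : comm' x g = 1 := by
  rw [comm', mul_assoc, h.eq]
  group

theorem comm'_ne_right (hg : g ≠ 1) : comm' x g ≠ g := by
  intro h
  apply hg
  have hconj : x⁻¹ * g⁻¹ * x = 1 := mul_right_cancel (h.trans (one_mul g).symm)
  have hinv : g⁻¹ = 1 := by simpa [mul_assoc] using congrArg (fun t => x * t * x⁻¹) hconj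
  exact inv_eq_one.mp hinv

theorem comm'_sq_right_of_comm'_eq_inv (h : comm' x g = g⁻¹) :
    comm' x (g ^ 2) = (g ^ 2)⁻¹ := by
  have hconj : x⁻¹ * g⁻¹ * x = g⁻¹ * g⁻¹ := eq_mul_inv_of_mul_eq h
  calc comm' x (g ^ 2) = (x⁻¹ * g⁻¹ * x) * (x⁻¹ * g⁻¹ * x) * g ^ 2 := by simp only [comm']; group
    _ = (g ^ 2)⁻¹ := by rw [hconj]; group

theorem comm'_ne_inv_of_sq_mem_center (hg : g ≠ 1) (hcen : ∀ y : G, g ^ 2 * y = y * g ^ 2) :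
    comm' x g ≠ g⁻¹ := by
  intro h
  have hsq : g ^ 2 = 1 := by
    simpa [comm'_eq_one_of_commute (hcen x).symm] using comm'_sq_right_of_comm'_eq_inv h
  have hinv : g⁻¹ = g := inv_eq_of_mul_eq_one_right (by rwa [← sq])
  exact comm'_ne_right hg (h.trans hinv)

end Commutator

section DeltaGraph

variable {G : Type*} [Group G] {H : Subgroup G} {g : G}

theorem ne_one_of_notMem_relCenter (hgZ : g ∉ relCenter G H) : g ≠ 1 := by
  rintro rfl
  exact hgZ ⟨H.one_mem, fun y => by simp⟩

theorem gnc_adj_or_eq_of_comm'_ne_inv (hgH : g ∈ H) (hgZ : g ∉ relCenter G H)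
    {v : ((relCenter G H)ᶜ : Set G)} (hv : comm' (v : G) g ≠ g⁻¹) :
    (gnc G H g).Adj v ⟨g, hgZ⟩ ∨ v = ⟨g, hgZ⟩ := by
  by_cases hvg : v = ⟨g, hgZ⟩
  · exact Or.inr hvg
  · exact Or.inl ⟨hvg, Or.inr hgH, comm'_ne_right (ne_one_of_notMem_relCenter hgZ), hv⟩

theorem gnc_adj_self_sq (hgH : g ∈ H) (hgZ : g ∉ relCenter G H)
    (hg2 : g ^ 2 ∉ relCenter G H) :
    (gnc G H g).Adj ⟨g, hgZ⟩ ⟨g ^ 2, hg2⟩ := by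
  have hg1 := ne_one_of_notMem_relCenter hgZ
  have hcomm : comm' g (g ^ 2) = 1 := comm'_eq_one_of_commute (Commute.self_pow g 2)
  refine ⟨fun h => hg1 ?_, Or.inl hgH, ?_, ?_⟩
  · simpa [sq] using congrArg Subtype.val h
  · rw [hcomm]; exact hg1.symm
  · rw [hcomm]; exact (inv_ne_one.mpr hg1).symm

theorem gnc_adj_sq_of_comm'_eq_inv (hgH : g ∈ H) (hg1 : g ≠ 1) (hg3 : g ^ 3 ≠ 1)
    (hg2 : g ^ 2 ∉ relCenter G H) {v : ((relCenter G H)ᶜ : Set G)}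
    (hv : comm' (v : G) g = g⁻¹) :
    (gnc G H g).Adj v ⟨g ^ 2, hg2⟩ := by
  have hvg2 : comm' (v : G) (g ^ 2) = (g ^ 2)⁻¹ := comm'_sq_right_of_comm'_eq_inv hv
  refine ⟨fun h => ?_, Or.inr (H.pow_mem hgH 2), ?_, ?_⟩
  · rw [congrArg Subtype.val h, comm'_eq_one_of_commute (Commute.pow_self g 2)] at hv
    exact inv_ne_one.mpr hg1 hv.symm
  · rw [hvg2]
    intro h
    apply hg3
    calc g ^ 3 = g ^ 2 * g := pow_succ g 2
      _ = g ^ 2 * (g ^ 2)⁻¹ := by rw [h]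
      _ = 1 := mul_inv_cancel _
  · rw [hvg2, ne_eq, inv_inj]
    intro h
    exact hg1 (by simpa [sq] using h)

theorem gnc_exists_dominating_pair (hgH : g ∈ H) (hgZ : g ∉ relCenter G H) (hg3 : g ^ 3 ≠ 1) :
    ∃ a b, (gnc G H g).edist a b ≤ 1 ∧
      ∀ v, (gnc G H g).edist v a ≤ 1 ∨ (gnc G H g).edist v b ≤ 1 := by
  simp only [edist_le_one_iff_adj_or_eq]
  have hg1 := ne_one_of_notMem_relCenter hgZ
  by_cases hg2 : g ^ 2 ∈ relCenter G H
  · refine ⟨⟨g, hgZ⟩, ⟨g, hgZ⟩, Or.inr rfl, fun v => Or.inl ?_⟩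
    exact gnc_adj_or_eq_of_comm'_ne_inv hgH hgZ (comm'_ne_inv_of_sq_mem_center hg1 hg2.2)
  · refine ⟨⟨g, hgZ⟩, ⟨g ^ 2, hg2⟩, Or.inl (gnc_adj_self_sq hgH hgZ hg2), fun v => ?_⟩
    by_cases hv : comm' (v : G) g = g⁻¹
    · exact Or.inr (Or.inl (gnc_adj_sq_of_comm'_eq_inv hgH hg1 hg3 hg2 hv))
    · exact Or.inl (gnc_adj_or_eq_of_comm'_ne_inv hgH hgZ hv)

end DeltaGraph

theorem stmt11_general {G : Type*} [Group G]
    (H : Subgroup G) (g : G) (hgH : g ∈ H) (hgZ : g ∉ relCenter G H)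
    (hg3 : g ^ 3 ≠ 1) :
    (gnc G H g).Connected ∧
    (∀ u v : ((relCenter G H)ᶜ : Set G), (gnc G H g).dist u v ≤ 3) ∧
    (gnc G H g).diam ≤ 3 := by
  obtain ⟨a, b, hab, hcover⟩ := gnc_exists_dominating_pair hgH hgZ hg3
  have hediam : (gnc G H g).ediam ≤ 3 := ediam_le_three_of_edist_le_one hab hcover
  have hfinite : (gnc G H g).ediam ≠ ⊤ := ne_top_of_le_ne_top (by decide) hediam
  have hdiam : (gnc G H g).diam ≤ 3 := ENat.toNat_le_of_le_natCast hediam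
  have : Nonempty ((relCenter G H)ᶜ : Set G) := ⟨a⟩
  exact ⟨connected_of_ediam_ne_top hfinite, fun u v => (dist_le_diam hfinite).trans hdiam, hdiam⟩

/-- if `g ∈ H \ Z(H,G)` and `g³ ≠ 1` then `Δ_{H,G}^g` is connected,
any two vertices are at distance at most `3`, and its diameter is at most `3`. -/
theorem stmt11 {G : Type*} [Group G] [Fintype G]
    (hna : ∃ x y : G, x * y ≠ y * x)
    (H : Subgroup G) (g : G) (hgH : g ∈ H) (hgZ : g ∉ relCenter G H)
    (hg3 : g ^ 3 ≠ 1) :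
    (gnc G H g).Connected ∧
    (∀ u v : ((relCenter G H)ᶜ : Set G), (gnc G H g).dist u v ≤ 3) ∧
    (gnc G H g).diam ≤ 3 :=
  stmt11_general H g hgH hgZ hg3
end

section
/- Let n ≥ 8 be even, G = D_{2n} the dihedral group of order 2n, H = ⟨a^r b⟩ = {1, a^r b} for some 1 ≤ r ≤ n, and g ∈ ⟨a²⟩. Then the graph Δ_{H,G}^g is not connected. -/
/-!
Write `g = a^(2k)`. Since `n` is even there is `j ≢ 0 (mod n)` with `2j ≡ 2k` (take `j = k`, or
`j = n/2` when `k ≡ 0`). The rotation `a^j` lies outside `H = {1, a^r b}`, so its only possible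
neighbour is the reflection `a^r b`, and `[a^j, a^r b] = a^(-2j) = g⁻¹`. Hence `a^j` is an isolated
vertex of a graph with at least two vertices.
-/

open SimpleGraph

theorem SimpleGraph.not_preconnected_of_isIsolated {V : Type*} [Nontrivial V] {G : SimpleGraph V}
    {v : V} (hv : G.IsIsolated v) : ¬ G.Preconnected := fun h =>
  let ⟨w, hw⟩ := h.exists_adj_of_nontrivial v
  hv w hw

theorem ZMod.exists_ne_zero_add_self_eq_add_self {n : ℕ} (hn : n ≠ 0) (he : Even n)
    (k : ZMod n) : ∃ j : ZMod n, j ≠ 0 ∧ j + j = k + k := by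
  by_cases hk : k = 0
  · obtain ⟨m, rfl⟩ := he
    refine ⟨(m : ZMod (m + m)), ?_, ?_⟩
    · rw [ne_eq, ZMod.natCast_eq_zero_iff]
      exact fun hdvd => by have := Nat.le_of_dvd (by omega) hdvd; omega
    · rw [hk, ← Nat.cast_add, ZMod.natCast_self, add_zero]
  · exact ⟨k, hk, rfl⟩

section RelCenter

variable {G : Type*} [Group G] {H : Subgroup G}

theorem one_mem_relCenter : (1 : G) ∈ relCenter G H :=
  ⟨H.one_mem, fun y => by rw [one_mul, mul_one]⟩

theorem mem_compl_relCenter_of_notMem {x : G} (hx : x ∉ H) : x ∈ (relCenter G H)ᶜ :=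
  fun h => hx h.1

theorem gnc_isIsolated {g : G} {x : ((relCenter G H)ᶜ : Set G)} (hx : (x : G) ∉ H)
    (hcomm : ∀ y ∈ H, y ∉ relCenter G H → comm' (x : G) y = g ∨ comm' (x : G) y = g⁻¹) :
    (gnc G H g).IsIsolated x := by
  rintro ⟨y, hy⟩ ⟨-, hxy, hg, hg'⟩
  rcases hcomm y (hxy.resolve_left hx) hy with h | h
  exacts [hg h, hg' h]

end RelCenter

namespace DihedralGroup

variable {n : ℕ}

theorem eq_one_or_eq_sr_of_mem_zpowers_sr {i : ZMod n} {x : DihedralGroup n}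
    (hx : x ∈ Subgroup.zpowers (sr i)) : x = 1 ∨ x = sr i := by
  obtain ⟨k, rfl⟩ := hx
  beta_reduce
  have hsq : sr i ^ (2 : ℤ) = 1 := by rw [zpow_two, sr_mul_self]
  rcases Int.even_or_odd k with ⟨m, rfl⟩ | ⟨m, rfl⟩
  · left
    rw [← two_mul, zpow_mul, hsq, one_zpow]
  · right
    rw [zpow_add, zpow_mul, hsq, one_zpow, one_mul, zpow_one]

theorem r_one_sq_zpow (k : ℤ) :
    ((r 1 : DihedralGroup n) ^ 2) ^ k = r ((k : ZMod n) + (k : ZMod n)) := by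
  rw [← zpow_natCast, ← zpow_mul, r_one_zpow]
  push_cast
  ring_nf

theorem comm'_r_sr (i j : ZMod n) : comm' (r i) (sr j) = r (-(i + i)) := by
  simp only [comm', inv_r, inv_sr, r_mul_sr, sr_mul_r, sr_mul_sr]
  ring_nf

end DihedralGroup

theorem stmt14_general (n : ℕ) (hn : 8 ≤ n) (hne : Even n)
    (r : ℕ)
    (g : DihedralGroup n)
    (hg : g ∈ Subgroup.zpowers ((DihedralGroup.r 1 : DihedralGroup n) ^ 2)) :
    ¬ (gnc (DihedralGroup n)
        (Subgroup.zpowers ((DihedralGroup.r 1 : DihedralGroup n) ^ r * DihedralGroup.sr 0)) g).Connected := by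
  have hgen : (DihedralGroup.r 1 : DihedralGroup n) ^ r * DihedralGroup.sr 0
      = DihedralGroup.sr (-(r : ZMod n)) := by
    rw [DihedralGroup.r_one_pow, DihedralGroup.r_mul_sr, zero_sub]
  rw [hgen]
  set H := Subgroup.zpowers (DihedralGroup.sr (-(r : ZMod n)))
  obtain ⟨k, rfl⟩ := hg
  obtain ⟨j, hj, hjk⟩ := ZMod.exists_ne_zero_add_self_eq_add_self (by omega) hne (k : ZMod n)
  have hrj : DihedralGroup.r j ∉ H := fun h => by
    rcases DihedralGroup.eq_one_or_eq_sr_of_mem_zpowers_sr h with h | h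
    · exact hj (DihedralGroup.r.inj h)
    · cases h
  have hsr : DihedralGroup.sr (1 - (r : ZMod n)) ∉ H := fun h => by
    rcases DihedralGroup.eq_one_or_eq_sr_of_mem_zpowers_sr h with h | h
    · cases h
    · have : Fact (1 < n) := ⟨by omega⟩
      simpa using DihedralGroup.sr.inj h
  have : Nontrivial ((relCenter _ H)ᶜ : Set (DihedralGroup n)) :=
    ⟨⟨_, mem_compl_relCenter_of_notMem hrj⟩, ⟨_, mem_compl_relCenter_of_notMem hsr⟩,
      fun h => by cases congrArg Subtype.val h⟩
  have hisol : (gnc _ H ((DihedralGroup.r 1 ^ 2) ^ k)).IsIsolated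
      ⟨_, mem_compl_relCenter_of_notMem hrj⟩ := by
    refine gnc_isIsolated hrj fun y hy hyZ => ?_
    rcases DihedralGroup.eq_one_or_eq_sr_of_mem_zpowers_sr hy with rfl | rfl
    · exact absurd one_mem_relCenter hyZ
    · right
      rw [DihedralGroup.comm'_r_sr, DihedralGroup.r_one_sq_zpow, DihedralGroup.inv_r, hjk]
  exact fun hconn => not_preconnected_of_isIsolated hisol hconn.preconnected

/-- for even `n ≥ 8`, `G = D_{2n}`, `H = ⟨a^r b⟩` (`1 ≤ r ≤ n`) and
`g ∈ ⟨a²⟩`, the graph `Δ_{H,G}^g` is not connected. -/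
theorem stmt14 (n : ℕ) (hn : 8 ≤ n) (hne : Even n)
    (r : ℕ) (hr1 : 1 ≤ r) (hr2 : r ≤ n)
    (g : DihedralGroup n)
    (hg : g ∈ Subgroup.zpowers ((DihedralGroup.r 1 : DihedralGroup n) ^ 2)) :
    ¬ (gnc (DihedralGroup n)
        (Subgroup.zpowers ((DihedralGroup.r 1 : DihedralGroup n) ^ r * DihedralGroup.sr 0)) g).Connected :=
  stmt14_general n hn hne r g hg
end

section
/- Let n ≥ 8 with n divisible by 4, G = D_{2n} the dihedral group of order 2n, H = ⟨a², b⟩ or H = ⟨a², ab⟩, and g ∈ ⟨a²⟩. If g = 1 then the graph Δ_{H,G}^g is connected and its diameter equals 2; if g ≠ 1 then Δ_{H,G}^g is connected and its diameter is at most 3. -/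
open SimpleGraph

/-!
Every commutator in `D_{2n}` is a rotation: `[r i, r j] = 1`, `[sr i, r j] = r (2 j)` and
`[sr i, sr j] = r (2 (j - i))`, and the vertices are all reflections and the rotations `r i`
with `2 i ≠ 0`. Write `g = r (2 k)` and let `sr e ∈ H`. Since `4 ∣ n`, the residue mod `4`
separates the commutators `r (2 (2 a + 1))` from `r (4 b)`.

If `g = 1`, every reflection `sr (e + 2 m)` (these lie in `H`) is adjacent to every vertex
not of this form, so all distances are at most `2`; the commuting vertices `r 1` and `r 2` are
at distance exactly `2`. If `g = r (4 m) ≠ 1`, every vertex is adjacent to `r 1` or to `sr e`;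
if `g = r (2 (2 m + 1))`, every vertex is adjacent to `r 1` or to `r 2`. A graph in which every
vertex is adjacent to one of two fixed vertices has diameter at most `3`.
-/

namespace SimpleGraph

variable {V : Type*} {G : SimpleGraph V}

lemma edist_le_two_of_adj_of_adj {u v w : V} (huw : G.Adj u w) (hwv : G.Adj w v) :
    G.edist u v ≤ 2 :=
  G.edist_triangle.trans (by rw [edist_eq_one_iff_adj.2 huw, edist_eq_one_iff_adj.2 hwv]; rfl)

lemma IsCompleteBetween.edist_le_two {s : Set V} (h : G.IsCompleteBetween s sᶜ)
    (hs : s.Nonempty) (hs' : sᶜ.Nonempty) (u v : V) : G.edist u v ≤ 2 := by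
  obtain ⟨a, ha⟩ := hs
  obtain ⟨b, hb⟩ := hs'
  by_cases hu : u ∈ s <;> by_cases hv : v ∈ s
  · exact edist_le_two_of_adj_of_adj (h hu hb) (h hv hb).symm
  · exact (edist_eq_one_iff_adj.2 (h hu hv)).trans_le (by norm_num)
  · exact (edist_eq_one_iff_adj.2 (h hv hu).symm).trans_le (by norm_num)
  · exact edist_le_two_of_adj_of_adj (h ha hu).symm (h ha hv)

lemma edist_le_three_of_forall_adj_or_adj {a b : V} (h : ∀ v, G.Adj a v ∨ G.Adj b v)
    (u v : V) : G.edist u v ≤ 3 := by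
  have hab : G.Adj a b := ((h a).resolve_left (G.irrefl)).symm
  have near : ∀ w, ∃ x, (x = a ∨ x = b) ∧ G.edist w x ≤ 1 := fun w ↦ by
    rcases h w with hw | hw
    exacts [⟨a, .inl rfl, (edist_eq_one_iff_adj.2 hw.symm).le⟩,
      ⟨b, .inr rfl, (edist_eq_one_iff_adj.2 hw.symm).le⟩]
  obtain ⟨x, hx, hux⟩ := near u
  obtain ⟨y, hy, hvy⟩ := near v
  have hxy : G.edist x y ≤ 1 := by
    rw [edist_le_one_iff_adj_or_eq]
    rcases hx with rfl | rfl <;> rcases hy with rfl | rfl <;> simp [hab, hab.symm]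
  calc G.edist u v ≤ G.edist u x + (G.edist x y + G.edist y v) :=
        G.edist_triangle.trans (add_le_add le_rfl G.edist_triangle)
    _ ≤ 1 + (1 + 1) := by rw [edist_comm (u := y)]; gcongr
    _ = 3 := by norm_num

lemma connected_and_diam_le_of_forall_edist_le [Nonempty V] {k : ℕ}
    (h : ∀ u v, G.edist u v ≤ k) : G.Connected ∧ G.diam ≤ k :=
  have hk := G.ediam_le_of_edist_le h
  ⟨connected_of_ediam_ne_top (ne_top_of_le_ne_top (ENat.natCast_ne_top k) hk),
    ENat.toNat_le_of_le_natCast hk⟩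

lemma diam_eq_of_forall_edist_le {k : ℕ} (h : ∀ u v, G.edist u v ≤ k) {u v : V}
    (huv : G.edist u v = k) : G.diam = k := by
  rw [diam, le_antisymm (G.ediam_le_of_edist_le h) (huv ▸ G.edist_le_ediam), ENat.toNat_natCast]

lemma connected_and_diam_le_three_of_forall_adj_or_adj {a b : V}
    (h : ∀ v, G.Adj a v ∨ G.Adj b v) : G.Connected ∧ G.diam ≤ 3 :=
  have : Nonempty V := ⟨a⟩
  connected_and_diam_le_of_forall_edist_le (edist_le_three_of_forall_adj_or_adj h)

end SimpleGraph

namespace ZMod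

variable {n : ℕ}

lemma exists_eq_two_mul_or_eq_two_mul_add_one (x : ZMod n) :
    ∃ m, x = 2 * m ∨ x = 2 * m + 1 := by
  obtain ⟨k, rfl⟩ := intCast_surjective x
  obtain ⟨m, rfl | rfl⟩ := Int.even_or_odd' k
  exacts [⟨m, .inl (by push_cast; ring)⟩, ⟨m, .inr (by push_cast; ring)⟩]

lemma two_mul_ne_two_mul_add_one (h2 : 2 ∣ n) (i j : ZMod n) : 2 * i ≠ 2 * j + 1 := by
  have key : ∀ a b : ZMod 2, 2 * a ≠ 2 * b + 1 := by decide
  intro h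
  have h' := congrArg (castHom h2 (ZMod 2)) h
  simp only [map_mul, map_add, map_one, map_ofNat] at h'
  exact key _ _ h'

lemma two_mul_two_mul_add_one_ne_four_mul (h4 : 4 ∣ n) (i m : ZMod n) :
    2 * (2 * i + 1) ≠ 4 * m := by
  have key : ∀ a b : ZMod 4, 2 * (2 * a + 1) ≠ 4 * b := by decide
  intro h
  have h' := congrArg (castHom h4 (ZMod 4)) h
  simp only [map_mul, map_add, map_one, map_ofNat] at h'
  exact key _ _ h'

lemma two_ne_zero_of_four_dvd (h4 : 4 ∣ n) : (2 : ZMod n) ≠ 0 := by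
  simpa using two_mul_two_mul_add_one_ne_four_mul h4 0 0

lemma two_mul_two_mul_add_one_ne_four_mul_and_ne_neg (h4 : 4 ∣ n) (i m : ZMod n) :
    2 * (2 * i + 1) ≠ 4 * m ∧ 2 * (2 * i + 1) ≠ -(4 * m) :=
  ⟨two_mul_two_mul_add_one_ne_four_mul h4 i m, by
    rw [← mul_neg]; exact two_mul_two_mul_add_one_ne_four_mul h4 i (-m)⟩

lemma four_mul_ne_two_mul_two_mul_add_one_and_ne_neg (h4 : 4 ∣ n) (i m : ZMod n) :
    4 * m ≠ 2 * (2 * i + 1) ∧ 4 * m ≠ -(2 * (2 * i + 1)) :=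
  ⟨(two_mul_two_mul_add_one_ne_four_mul h4 i m).symm, by
    rw [show -(2 * (2 * i + 1)) = 2 * (2 * (-i - 1) + 1) by ring]
    exact (two_mul_two_mul_add_one_ne_four_mul h4 _ m).symm⟩

end ZMod

namespace DihedralGroup

variable {n : ℕ}

@[simp]
lemma comm'_r_r (i j : ZMod n) : comm' (r i) (r j) = 1 := by
  rw [comm', inv_r, inv_r, r_mul_r, r_mul_r, r_mul_r, one_def]
  congr 1; ring

lemma comm'_sr_r (i j : ZMod n) : comm' (sr i) (r j) = r (2 * j) := by
  rw [comm', inv_sr, inv_r, sr_mul_r, sr_mul_sr, r_mul_r]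
  congr 1; ring

lemma comm'_sr_sr (i j : ZMod n) : comm' (sr i) (sr j) = r (2 * (j - i)) := by
  rw [comm', inv_sr, inv_sr, sr_mul_sr, r_mul_sr, sr_mul_sr]
  congr 1; ring

variable {H : Subgroup (DihedralGroup n)} {e : ZMod n}

lemma r_mem_compl_relCenter {i : ZMod n} (hi : 2 * i ≠ 0) :
    r i ∈ (relCenter (DihedralGroup n) H)ᶜ := fun h ↦ by
  have hc := h.2 (sr 0)
  rw [r_mul_sr, sr_mul_r, sr.injEq] at hc
  exact hi (by linear_combination -hc)

lemma sr_mem_compl_relCenter (h2 : (2 : ZMod n) ≠ 0) (j : ZMod n) :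
    sr j ∈ (relCenter (DihedralGroup n) H)ᶜ := fun h ↦ by
  have hc := h.2 (r 1)
  rw [r_mul_sr, sr_mul_r, sr.injEq] at hc
  exact h2 (by linear_combination hc)

lemma r_two_mul_mem (hr2 : r 2 ∈ H) (m : ZMod n) : r (2 * m) ∈ H := by
  obtain ⟨k, rfl⟩ := ZMod.intCast_surjective m
  simpa [r_zpow, mul_comm] using zpow_mem hr2 k

lemma sr_add_two_mul_mem (hr2 : r 2 ∈ H) (hse : sr e ∈ H) (m : ZMod n) :
    sr (e + 2 * m) ∈ H := by
  have h := mul_mem (r_two_mul_mem hr2 (-m)) hse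
  rwa [r_mul_sr, mul_neg, sub_neg_eq_add] at h

lemma two_mul_ne_zero_of_r_mem_compl_relCenter (h4 : 4 ∣ n) (hr2 : r 2 ∈ H) {i : ZMod n}
    (hi : r i ∈ (relCenter (DihedralGroup n) H)ᶜ) : 2 * i ≠ 0 := by
  intro h0
  obtain ⟨m, rfl | rfl⟩ := ZMod.exists_eq_two_mul_or_eq_two_mul_add_one i
  · refine hi ⟨r_two_mul_mem hr2 m, ?_⟩
    rintro (j | j)
    · rw [r_mul_r, r_mul_r, add_comm]
    · rw [r_mul_sr, sr_mul_r, sr.injEq]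
      linear_combination -h0
  · exact ZMod.two_mul_two_mul_add_one_ne_four_mul h4 m 0 (by rw [h0, mul_zero])

lemma gnc_adj_of_comm'_eq {t c : ZMod n} {x y : ((relCenter (DihedralGroup n) H)ᶜ : Set _)}
    (hxy : (x : DihedralGroup n) ≠ y) (hH : (x : DihedralGroup n) ∈ H ∨ (y : DihedralGroup n) ∈ H)
    (hc : comm' (x : DihedralGroup n) y = r c) (hct : c ≠ t ∧ c ≠ -t) :
    (gnc (DihedralGroup n) H (r t)).Adj x y := by
  refine ⟨fun h ↦ hxy (congrArg Subtype.val h), hH, ?_, ?_⟩ <;> rw [hc]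
  · exact fun h ↦ hct.1 (r.inj h)
  · exact fun h ↦ hct.2 (r.inj (h.trans (inv_r t)))


lemma gnc_one_isCompleteBetween (h4 : 4 ∣ n) (hr2 : r 2 ∈ H) (hse : sr e ∈ H) :
    (gnc (DihedralGroup n) H (r 0)).IsCompleteBetween
      {v | ∃ m, (v : DihedralGroup n) = sr (e + 2 * m)}
      {v | ∃ m, (v : DihedralGroup n) = sr (e + 2 * m)}ᶜ := by
  rintro ⟨_, -⟩ ⟨m, rfl⟩ ⟨i | j, hv⟩ hvS
  · refine gnc_adj_of_comm'_eq (by simp) (.inl (sr_add_two_mul_mem hr2 hse m))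
      (comm'_sr_r _ _) ?_
    rw [neg_zero, and_self]
    exact two_mul_ne_zero_of_r_mem_compl_relCenter h4 hr2 hv
  · obtain ⟨m', hj | hj⟩ := ZMod.exists_eq_two_mul_or_eq_two_mul_add_one (j - e)
    · exact absurd ⟨m', congrArg sr (by linear_combination hj)⟩ hvS
    · refine gnc_adj_of_comm'_eq (fun h ↦ hvS ⟨m, h.symm⟩)
        (.inl (sr_add_two_mul_mem hr2 hse m)) (comm'_sr_sr _ _) ?_
      rw [neg_zero, and_self, show 2 * (j - (e + 2 * m)) = 2 * (2 * (m' - m) + 1) by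
        linear_combination 2 * hj]
      simpa using ZMod.two_mul_two_mul_add_one_ne_four_mul h4 (m' - m) 0

theorem gnc_one_connected_and_diam_eq_two (h4 : 4 ∣ n) (h40 : (4 : ZMod n) ≠ 0)
    (hr2 : r 2 ∈ H) (hse : sr e ∈ H) :
    (gnc (DihedralGroup n) H 1).Connected ∧ (gnc (DihedralGroup n) H 1).diam = 2 := by
  rw [one_def]
  set S : Set ((relCenter (DihedralGroup n) H)ᶜ : Set _) :=
    {v | ∃ m, (v : DihedralGroup n) = sr (e + 2 * m)}
  have hS := gnc_one_isCompleteBetween h4 hr2 hse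
  let a : ((relCenter (DihedralGroup n) H)ᶜ : Set _) :=
    ⟨sr e, sr_mem_compl_relCenter (ZMod.two_ne_zero_of_four_dvd h4) e⟩
  let b₁ : ((relCenter (DihedralGroup n) H)ᶜ : Set _) :=
    ⟨r 1, r_mem_compl_relCenter (by simpa using ZMod.two_ne_zero_of_four_dvd h4)⟩
  let b₂ : ((relCenter (DihedralGroup n) H)ᶜ : Set _) :=
    ⟨r 2, r_mem_compl_relCenter (by norm_num [h40])⟩
  have ha : a ∈ S := ⟨0, by simp [a]⟩
  have hb : ∀ i h, (⟨r i, h⟩ : ((relCenter (DihedralGroup n) H)ᶜ : Set _)) ∉ S := by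
    rintro i h ⟨m, hm⟩
    simp at hm
  have hle := hS.edist_le_two ⟨a, ha⟩ ⟨b₁, hb _ _⟩
  have h12 : (gnc (DihedralGroup n) H (r 0)).edist b₁ b₂ = 2 := by
    refine edist_eq_two_iff.2 ⟨fun h ↦ ?_, fun h ↦ h.2.2.1 (by simp [b₁, b₂]), a,
      (hS ha (hb _ _)).symm, (hS ha (hb _ _)).symm⟩
    refine ZMod.two_mul_ne_two_mul_add_one (dvd_trans (by norm_num) h4) 1 0 ?_
    simpa [b₁, b₂] using (r.inj (congrArg Subtype.val h)).symm
  have : Nonempty ((relCenter (DihedralGroup n) H)ᶜ : Set _) := ⟨a⟩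
  exact ⟨(connected_and_diam_le_of_forall_edist_le hle).1, diam_eq_of_forall_edist_le hle h12⟩

lemma gnc_four_mul_adj_or_adj (h4 : 4 ∣ n) (hr2 : r 2 ∈ H) (hse : sr e ∈ H) {m : ZMod n}
    (hm : 4 * m ≠ 0) (v : ((relCenter (DihedralGroup n) H)ᶜ : Set _)) :
    (gnc (DihedralGroup n) H (r (4 * m))).Adj
        ⟨r 1, r_mem_compl_relCenter (by simpa using ZMod.two_ne_zero_of_four_dvd h4)⟩ v ∨
      (gnc (DihedralGroup n) H (r (4 * m))).Adj
        ⟨sr e, sr_mem_compl_relCenter (ZMod.two_ne_zero_of_four_dvd h4) e⟩ v := by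
  have hodd := ZMod.two_mul_two_mul_add_one_ne_four_mul_and_ne_neg h4
  rcases v with ⟨i | j, hv⟩
  · obtain ⟨k, rfl | rfl⟩ := ZMod.exists_eq_two_mul_or_eq_two_mul_add_one i
    · refine .inl (gnc_adj_of_comm'_eq (fun h ↦ ?_) (.inr (r_two_mul_mem hr2 k))
        ((comm'_r_r _ _).trans one_def) ⟨hm.symm, by rwa [ne_comm, neg_ne_zero]⟩)
      exact ZMod.two_mul_ne_two_mul_add_one (dvd_trans (by norm_num) h4) k 0
        (by simpa using (r.inj h).symm)
    · exact .inr (gnc_adj_of_comm'_eq (by simp) (.inl hse) (comm'_sr_r _ _) (hodd k m))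
  · obtain ⟨k, hj | hj⟩ := ZMod.exists_eq_two_mul_or_eq_two_mul_add_one (j - e)
    · obtain rfl : j = e + 2 * k := by linear_combination hj
      refine .inl (gnc_adj_of_comm'_eq (by simp) (.inl (sr_add_two_mul_mem hr2 hse k))
        (comm'_sr_r _ _) ?_).symm
      simpa using hodd 0 m
    · refine .inr (gnc_adj_of_comm'_eq (fun h ↦ ?_) (.inl hse) (comm'_sr_sr _ _) (hj ▸ hodd k m))
      refine ZMod.two_mul_ne_two_mul_add_one (dvd_trans (by norm_num) h4) 0 k ?_
      rw [← hj, sr.inj h, sub_self, mul_zero]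

lemma gnc_two_mul_two_mul_add_one_adj_or_adj (h4 : 4 ∣ n) (h40 : (4 : ZMod n) ≠ 0)
    (hr2 : r 2 ∈ H) (m : ZMod n) (v : ((relCenter (DihedralGroup n) H)ᶜ : Set _)) :
    (gnc (DihedralGroup n) H (r (2 * (2 * m + 1)))).Adj
        ⟨r 1, r_mem_compl_relCenter (by simpa using ZMod.two_ne_zero_of_four_dvd h4)⟩ v ∨
      (gnc (DihedralGroup n) H (r (2 * (2 * m + 1)))).Adj
        ⟨r 2, r_mem_compl_relCenter (by norm_num [h40])⟩ v := by
  have heven := ZMod.four_mul_ne_two_mul_two_mul_add_one_and_ne_neg h4 m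
  have h2 : 2 ∣ n := dvd_trans (by norm_num) h4
  rcases v with ⟨i | j, hv⟩
  · obtain ⟨k, rfl | rfl⟩ := ZMod.exists_eq_two_mul_or_eq_two_mul_add_one i
    · refine .inl (gnc_adj_of_comm'_eq (fun h ↦ ?_) (.inr (r_two_mul_mem hr2 k))
        ((comm'_r_r _ _).trans one_def) (by simpa using heven 0))
      exact ZMod.two_mul_ne_two_mul_add_one h2 k 0 (by simpa using (r.inj h).symm)
    · refine .inr (gnc_adj_of_comm'_eq (fun h ↦ ?_) (.inl hr2)
        ((comm'_r_r _ _).trans one_def) (by simpa using heven 0))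
      exact ZMod.two_mul_ne_two_mul_add_one h2 1 k (by simpa using r.inj h)
  · refine .inr (gnc_adj_of_comm'_eq (by simp) (.inr hr2) (comm'_sr_r _ _) ?_).symm
    rw [show (2 : ZMod n) * 2 = 4 * 1 by norm_num]
    exact heven 1

theorem gnc_connected_and_diam_le_three (h4 : 4 ∣ n) (h40 : (4 : ZMod n) ≠ 0)
    (hr2 : r 2 ∈ H) (hse : sr e ∈ H) {k : ZMod n} (hk : r (2 * k) ≠ 1) :
    (gnc (DihedralGroup n) H (r (2 * k))).Connected ∧
      (gnc (DihedralGroup n) H (r (2 * k))).diam ≤ 3 := by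
  obtain ⟨m, rfl | rfl⟩ := ZMod.exists_eq_two_mul_or_eq_two_mul_add_one k
  · rw [show 2 * (2 * m) = 4 * m by ring] at hk ⊢
    exact connected_and_diam_le_three_of_forall_adj_or_adj
      (gnc_four_mul_adj_or_adj h4 hr2 hse (fun h ↦ hk (by rw [h, r_zero])))
  · exact connected_and_diam_le_three_of_forall_adj_or_adj
      (gnc_two_mul_two_mul_add_one_adj_or_adj h4 h40 hr2 m)

end DihedralGroup

open DihedralGroup

/-- for `n ≥ 8` divisible by `4`, `G = D_{2n}`, `H = ⟨a², b⟩` or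
`⟨a², ab⟩` and `g ∈ ⟨a²⟩`: if `g = 1` then `Δ_{H,G}^g` is connected with diameter
`2`; if `g ≠ 1` then it is connected with diameter at most `3`. -/
theorem stmt16 (n : ℕ) (hn : 8 ≤ n) (h4 : 4 ∣ n)
    (H : Subgroup (DihedralGroup n))
    (hH : H = Subgroup.closure {(DihedralGroup.r 1 : DihedralGroup n) ^ 2, DihedralGroup.sr 0} ∨
          H = Subgroup.closure {(DihedralGroup.r 1 : DihedralGroup n) ^ 2, (DihedralGroup.r 1 : DihedralGroup n) * DihedralGroup.sr 0})
    (g : DihedralGroup n)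
    (hg : g ∈ Subgroup.zpowers ((DihedralGroup.r 1 : DihedralGroup n) ^ 2)) :
    (g = 1 → (gnc (DihedralGroup n) H g).Connected ∧
      (gnc (DihedralGroup n) H g).diam = 2) ∧
    (g ≠ 1 → (gnc (DihedralGroup n) H g).Connected ∧
      (gnc (DihedralGroup n) H g).diam ≤ 3) := by
  have h40 : (4 : ZMod n) ≠ 0 := by
    rw [← Nat.cast_ofNat, Ne, ZMod.natCast_eq_zero_iff]
    exact fun h ↦ by have := Nat.le_of_dvd (by norm_num) h; omega
  have hr1 : (r 1 : DihedralGroup n) ^ 2 = r 2 := by rw [r_one_pow]; norm_num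
  obtain ⟨e, hr2, hse⟩ : ∃ e, r 2 ∈ H ∧ sr e ∈ H := by
    rcases hH with rfl | rfl
    · exact ⟨0, Subgroup.subset_closure (by simp [hr1]), Subgroup.subset_closure (by simp)⟩
    · -- `a b = r 1 * sr 0 = sr (-1)`, since `r i * sr j = sr (j - i)`
      refine ⟨-1, Subgroup.subset_closure (by simp [hr1]), Subgroup.subset_closure ?_⟩
      simp [r_mul_sr]
  obtain ⟨k, rfl⟩ : ∃ k : ZMod n, g = r (2 * k) := by
    obtain ⟨k, rfl⟩ := Subgroup.mem_zpowers_iff.1 hg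
    exact ⟨k, by rw [hr1, r_zpow, mul_comm]⟩
  refine ⟨fun hg1 ↦ ?_, gnc_connected_and_diam_le_three h4 h40 hr2 hse⟩
  rw [hg1]
  exact gnc_one_connected_and_diam_eq_two h4 h40 hr2 hse
end
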